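/- arXiv:2201.07913 — 14 statements merged into one kernel-verified Lean document; each statement's English description precedes it below -/
import Mathlib

section
/- Let R be a commutative ring, S a multiplicative subset of R, and M an R-module. Then M is u-S-Noetherian if and only if there exists an element s ∈ S such that every ascending chain M₁ ⊆ M₂ ⊆ ⋯ of submodules of M is stationary with respect to s, i.e., there exists an index k ≥ 1 such that s•Mₙ ⊆ M_k for all n ≥ k. -/
/-- An `R`-module `M` is uniformly `S`-Noetherian if there exists `s ∈ S` such that
every submodule `N` of `M` contains a finitely generated submodule `F` with `s • N ⊆ F`. -/
def IsUSNoetherianModule (R : Type*) [CommRing R] (S : Submonoid R)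
    (M : Type*) [AddCommGroup M] [Module R M] : Prop :=
  ∃ s ∈ S, ∀ N : Submodule R M, ∃ F : Submodule R M,
    F.FG ∧ F ≤ N ∧ ∀ x ∈ N, s • x ∈ F

/-- A commutative ring `R` is uniformly `S`-Noetherian if there exists `s ∈ S` such that
every ideal `I` of `R` contains a finitely generated ideal `K` with `s • I ⊆ K`. -/
def IsUSNoetherianRing (R : Type*) [CommRing R] (S : Submonoid R) : Prop :=
  ∃ s ∈ S, ∀ I : Ideal R, ∃ K : Ideal R,
    K.FG ∧ K ≤ I ∧ ∀ x ∈ I, s * x ∈ K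

/-- Eakin–Nagata–Formanek (chain form): `M` is `u`-`S`-Noetherian iff there exists `s ∈ S`
such that every ascending chain of submodules of `M` is stationary with respect to `s`. -/
theorem isUSNoetherianModule_iff_ascending_chain_stationary
    (R : Type*) [CommRing R] (S : Submonoid R)
    (M : Type*) [AddCommGroup M] [Module R M] :
    IsUSNoetherianModule R S M ↔
      ∃ s ∈ S, ∀ c : ℕ → Submodule R M, Monotone c →
        ∃ k : ℕ, 1 ≤ k ∧ ∀ n, k ≤ n → ∀ x ∈ c n, s • x ∈ c k := by
  constructor
  · rintro ⟨s, hs, h⟩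
    refine ⟨s, hs, fun c hc => ?_⟩
    obtain ⟨F, hF, hFle, hsF⟩ := h (⨆ n, c n)
    have hcomp := (Submodule.fg_iff_compact F).1 hF
    rw [CompleteLattice.isCompactElement_iff_le_of_directed_sSup_le] at hcomp
    obtain ⟨x, ⟨k, rfl⟩, hkx⟩ := hcomp (Set.range c) (Set.range_nonempty c)
      (hc.directed_le.directedOn_range) (by rw [sSup_range]; exact hFle)
    refine ⟨max k 1, le_max_right _ _, fun n hn x hx => ?_⟩
    have hxN : x ∈ ⨆ n, c n := le_iSup c n hx
    exact hc (le_max_left k 1) (hkx (hsF x hxN))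
  · rintro ⟨s, hs, h⟩
    refine ⟨s, hs, fun N => ?_⟩
    by_contra hcon
    push_neg at hcon
    choose x hxN hxF using hcon
    let step : {F : Submodule R M // F.FG ∧ F ≤ N} → {F : Submodule R M // F.FG ∧ F ≤ N} :=
      fun F => ⟨F.1 ⊔ Submodule.span R {x F.1 F.2.1 F.2.2},
        F.2.1.sup (Submodule.fg_span_singleton _),
        sup_le F.2.2 ((Submodule.span_singleton_le_iff_mem _ _).2 (hxN _ _ _))⟩
    let p : ℕ → {F : Submodule R M // F.FG ∧ F ≤ N} :=
      fun n => step^[n] ⟨⊥, Submodule.fg_bot, bot_le⟩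
    have hpsucc : ∀ n, p (n + 1) = step (p n) := fun n => Function.iterate_succ_apply' ..
    have hmono : Monotone fun n => (p n).1 := by
      apply monotone_nat_of_le_succ
      intro n
      rw [hpsucc]
      exact le_sup_left
    obtain ⟨k, hk1, hk⟩ := h (fun n => (p n).1) hmono
    set F := (p k).1 with hF
    have hxmem : x F (p k).2.1 (p k).2.2 ∈ (p (k + 1)).1 := by
      rw [hpsucc]
      exact Submodule.mem_sup_right (Submodule.mem_span_singleton_self _)
    exact hxF F (p k).2.1 (p k).2.2 (hk (k + 1) (by omega) _ hxmem)
end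

section
/- Let R be a commutative ring, S a multiplicative subset of R, and M an R-module. Then M is u-S-Noetherian if and only if there exists an element s ∈ S such that every nonempty family Γ of submodules of M has an element M₀ which is maximal with respect to s, meaning that for every M' ∈ Γ with M₀ ⊆ M' one has s•M' ⊆ M₀. -/
/-- Eakin–Nagata–Formanek (maximal-element form): `M` is `u`-`S`-Noetherian iff there exists
`s ∈ S` such that every nonempty family of submodules of `M` has an element maximal with
respect to `s`. -/
theorem isUSNoetherianModule_iff_maximal_element
    (R : Type*) [CommRing R] (S : Submonoid R)
    (M : Type*) [AddCommGroup M] [Module R M] :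
    IsUSNoetherianModule R S M ↔
      ∃ s ∈ S, ∀ Γ : Set (Submodule R M), Γ.Nonempty →
        ∃ M₀ ∈ Γ, ∀ M' ∈ Γ, M₀ ≤ M' → ∀ x ∈ M', s • x ∈ M₀ := by
  constructor
  · rintro ⟨s, hs, h⟩
    refine ⟨s, hs, fun Γ hΓ => ?_⟩
    by_contra hcon
    push_neg at hcon
    obtain ⟨M₁, hM₁⟩ := hΓ
    choose f hfΓ hfle y hy hsy using hcon
    -- build an ascending chain
    let g : ℕ → {P : Submodule R M // P ∈ Γ} := fun n =>
      Nat.rec ⟨M₁, hM₁⟩ (fun _ p => ⟨f p.1 p.2, hfΓ p.1 p.2⟩) n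
    have hgs : ∀ n, (g n).1 ≤ (g (n + 1)).1 := fun n => hfle (g n).1 (g n).2
    have hmono : Monotone fun n => (g n).1 := monotone_nat_of_le_succ hgs
    obtain ⟨F, hFfg, hFle, hF⟩ := h (⨆ n, (g n).1)
    -- F is f.g., contained in the sup of a chain, hence in some g k
    obtain ⟨T, hT⟩ := hFfg
    have hTk : ∃ k, (T : Set M) ⊆ (g k).1 := by
      have : ∀ x ∈ T, ∃ k, x ∈ (g k).1 := by
        intro x hx
        have : x ∈ (⨆ n, (g n).1) := hFle (hT ▸ Submodule.subset_span hx)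
        exact (Submodule.mem_iSup_of_chain ⟨fun n => (g n).1, hmono⟩ x).mp this
      choose k hk using this
      classical
      let bound : M → ℕ := fun x => if hx : x ∈ T then k x hx else 0
      refine ⟨T.sup bound, fun x hx => ?_⟩
      have hb : k x hx ≤ T.sup bound := by
        have : bound x = k x hx := dif_pos hx
        exact this ▸ Finset.le_sup hx
      exact hmono hb (hk x hx)
    obtain ⟨k, hk⟩ := hTk
    have hFk : F ≤ (g k).1 := hT ▸ Submodule.span_le.mpr hk
    -- contradiction with the chosen witness
    have hyk : y (g k).1 (g k).2 ∈ (g (k + 1)).1 := hy (g k).1 (g k).2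
    have : s • y (g k).1 (g k).2 ∈ F :=
      hF _ (Submodule.mem_iSup_of_chain ⟨fun n => (g n).1, hmono⟩ _ |>.mpr ⟨k + 1, hyk⟩)
    exact hsy (g k).1 (g k).2 (hFk this)
  · rintro ⟨s, hs, h⟩
    refine ⟨s, hs, fun N => ?_⟩
    obtain ⟨M₀, hM₀, hmax⟩ := h {F : Submodule R M | F.FG ∧ F ≤ N}
      ⟨⊥, Submodule.fg_bot, bot_le⟩
    refine ⟨M₀, hM₀.1, hM₀.2, fun x hx => ?_⟩
    have hF : M₀ ⊔ Submodule.span R {x} ∈ {F : Submodule R M | F.FG ∧ F ≤ N} :=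
      ⟨hM₀.1.sup (Submodule.fg_span_singleton x),
        sup_le hM₀.2 ((Submodule.span_singleton_le_iff_mem x N).mpr hx)⟩
    exact hmax _ hF le_sup_left x (Submodule.mem_sup_right (Submodule.mem_span_singleton_self x))
end

section
/- Let R be a commutative ring and S a multiplicative subset of R. If R is a u-S-Noetherian ring, then there exists an element s ∈ S such that the localization R_s of R at the multiplicative set {1, s, s², …} of powers of s is a Noetherian ring. -/
/-- If `R` is `u`-`S`-Noetherian, then there exists `s ∈ S` such that the localization of `R`
at the powers of `s` is a Noetherian ring. -/
theorem exists_localization_powers_isNoetherianRing_of_isUSNoetherianRing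
    (R : Type*) [CommRing R] (S : Submonoid R) (h : IsUSNoetherianRing R S) :
    ∃ s ∈ S, IsNoetherianRing (Localization (Submonoid.powers s)) := by
  obtain ⟨s, hs, hI⟩ := h
  refine ⟨s, hs, ?_⟩
  rw [isNoetherianRing_iff_ideal_fg]
  intro J
  set f := algebraMap R (Localization (Submonoid.powers s)) with hf
  obtain ⟨K, hKfg, hKle, hKs⟩ := hI (J.comap f)
  have hJ : J = Ideal.map f (J.comap f) :=
    (IsLocalization.map_comap (Submonoid.powers s) _ J).symm
  have hmap : Ideal.map f (J.comap f) = Ideal.map f K := by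
    apply le_antisymm
    · rw [Ideal.map_le_iff_le_comap]
      intro x hx
      rw [Ideal.mem_comap]
      have hsx : f (s * x) ∈ Ideal.map f K := Ideal.mem_map_of_mem f (hKs x hx)
      obtain ⟨u, hu⟩ : IsUnit (f s) :=
        IsLocalization.map_units _ ⟨s, Submonoid.mem_powers s⟩
      have hx' : f x = (↑u⁻¹ : Localization (Submonoid.powers s)) * f (s * x) := by
        rw [map_mul, ← hu, ← mul_assoc, Units.inv_mul, one_mul]
      rw [hx']
      exact Ideal.mul_mem_left _ _ hsx
    · exact Ideal.map_mono hKle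
  rw [hJ, hmap]
  exact Ideal.FG.map hKfg f
end

section
/- Let R be a commutative ring and S a multiplicative subset of R. If R is a u-S-PIR, then there exists an element s ∈ S such that the localization R_s of R at the multiplicative set {1, s, s², …} of powers of s is a principal ideal ring (every ideal of R_s is principal). -/
/-!
Inverting `s` makes `s • I ⊆ (a) ⊆ I` collapse to `I = (a)`: every ideal of a localization is
extended from its contraction `I`, and the extension of `s • I` is that of `I` because `s`
becomes a unit.
-/

/-- A commutative ring `R` is a uniformly `S`-principal ideal ring (`u`-`S`-PIR) if there exists
`s ∈ S` such that for every ideal `I` of `R` there is `a ∈ I` with `s • I ⊆ (a)`. -/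
def IsUSPIR (R : Type*) [CommRing R] (S : Submonoid R) : Prop :=
  ∃ s ∈ S, ∀ I : Ideal R, ∃ a ∈ I, ∀ x ∈ I, s * x ∈ Ideal.span {a}

theorem Ideal.map_eq_span_singleton_of_mul_mem_span {R S : Type*} [CommSemiring R]
    [CommSemiring S] (f : R →+* S) {s a : R} (hs : IsUnit (f s)) {I : Ideal R} (ha : a ∈ I)
    (hsI : ∀ x ∈ I, s * x ∈ Ideal.span {a}) :
    I.map f = Ideal.span {f a} := by
  refine le_antisymm (Ideal.map_le_iff_le_comap.mpr fun x hx => ?_)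
    (Ideal.span_singleton_le_iff_mem _ |>.mpr (Ideal.mem_map_of_mem f ha))
  have hsx : f s * f x ∈ Ideal.span {f a} := by
    rw [← map_mul, ← Set.image_singleton, ← Ideal.map_span]
    exact Ideal.mem_map_of_mem f (hsI x hx)
  exact (Ideal.unit_mul_mem_iff_mem _ hs).mp hsx

theorem IsLocalization.isPrincipalIdealRing_of_mul_mem_span {R S : Type*} [CommRing R]
    [CommRing S] [Algebra R S] (M : Submonoid R) [IsLocalization M S] {s : R}
    (hs : IsUnit (algebraMap R S s))
    (hR : ∀ I : Ideal R, ∃ a ∈ I, ∀ x ∈ I, s * x ∈ Ideal.span {a}) :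
    IsPrincipalIdealRing S where
  principal J := by
    obtain ⟨a, ha, hsJ⟩ := hR (J.comap (algebraMap R S))
    rw [← IsLocalization.map_under M S J,
      Ideal.map_eq_span_singleton_of_mul_mem_span _ hs ha hsJ]
    exact ⟨_, rfl⟩

/-- If `R` is a `u`-`S`-PIR, then there exists `s ∈ S` such that the localization of `R`
at the powers of `s` is a principal ideal ring. -/
theorem exists_localization_powers_isPrincipalIdealRing_of_isUSPIR
    (R : Type*) [CommRing R] (S : Submonoid R) (h : IsUSPIR R S) :
    ∃ s ∈ S, IsPrincipalIdealRing (Localization (Submonoid.powers s)) := by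
  obtain ⟨s, hsS, hs⟩ := h
  exact ⟨s, hsS, IsLocalization.isPrincipalIdealRing_of_mul_mem_span (Submonoid.powers s)
    (IsLocalization.map_units _ ⟨s, Submonoid.mem_powers s⟩) hs⟩
end

section
/- Let R be a commutative ring and S a multiplicative subset of R consisting of finitely many elements. Then R is a u-S-Noetherian ring if and only if R is an S-Noetherian ring. -/
/-- A commutative ring `R` is `S`-Noetherian if for every ideal `I` of `R` there exist
`s ∈ S` (depending on `I`) and a finitely generated ideal `K ⊆ I` with `s • I ⊆ K`. -/
def IsSNoetherianRing (R : Type*) [CommRing R] (S : Submonoid R) : Prop :=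
  ∀ I : Ideal R, ∃ s ∈ S, ∃ K : Ideal R,
    K.FG ∧ K ≤ I ∧ ∀ x ∈ I, s * x ∈ K

/-- If the multiplicative set `S` is finite, then `R` is `u`-`S`-Noetherian iff `R` is
`S`-Noetherian. -/
theorem isUSNoetherianRing_iff_isSNoetherianRing_of_finite
    (R : Type*) [CommRing R] (S : Submonoid R) (hS : (S : Set R).Finite) :
    IsUSNoetherianRing R S ↔ IsSNoetherianRing R S := by
  constructor
  · rintro ⟨s, hs, h⟩ I
    exact ⟨s, hs, h I⟩
  · intro h
    classical
    refine ⟨∏ t ∈ hS.toFinset, t, Submonoid.prod_mem S (fun t ht => by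
      simpa using ht), fun I => ?_⟩
    obtain ⟨t, ht, K, hKfg, hKI, hK⟩ := h I
    refine ⟨K, hKfg, hKI, fun x hx => ?_⟩
    have htmem : t ∈ hS.toFinset := by simpa using ht
    rw [← Finset.mul_prod_erase _ _ htmem, mul_right_comm]
    exact K.mul_mem_right _ (hK x hx)
end

section
/- Let k be a field, R = k[x₁, x₂, …] the polynomial ring over k in countably infinitely many variables (multivariate polynomials indexed by ℕ), and S = R ∖ {0} the set of all nonzero elements of R. Then R is an S-Noetherian ring, but R is not a u-S-Noetherian ring. -/
open MvPolynomial in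
private lemma aux_aeval_fix {k : Type*} [Field k] (g : ℕ → MvPolynomial ℕ k)
    (p : MvPolynomial ℕ k) (hg : ∀ i ∈ p.vars, g i = X i) :
    MvPolynomial.aeval g p = p := by
  have : MvPolynomial.aeval g p = MvPolynomial.aeval X p := by
    rw [aeval_def, aeval_def]
    exact eval₂Hom_congr' rfl (fun i h _ => hg i h) rfl
  rw [this, aeval_X_left_apply]

/-- Let `R = k[x₁, x₂, …]` be a polynomial ring in countably many variables over a field `k`,
and `S = R \ {0}`. Then `R` is `S`-Noetherian but not `u`-`S`-Noetherian. -/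
theorem mvPolynomial_isSNoetherian_not_isUSNoetherian
    (k : Type*) [Field k] (S : Submonoid (MvPolynomial ℕ k))
    (hS : (S : Set (MvPolynomial ℕ k)) = {x : MvPolynomial ℕ k | x ≠ 0}) :
    IsSNoetherianRing (MvPolynomial ℕ k) S ∧ ¬ IsUSNoetherianRing (MvPolynomial ℕ k) S := by
  have hmem : ∀ x : MvPolynomial ℕ k, x ∈ S ↔ x ≠ 0 := by
    intro x
    rw [← SetLike.mem_coe, hS]; rfl
  constructor
  · intro I
    by_cases hI : I = ⊥
    · refine ⟨1, (hmem 1).2 one_ne_zero, ⊥, Submodule.fg_bot, bot_le, ?_⟩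
      intro x hx
      rw [hI] at hx
      simp [(Submodule.mem_bot _).1 hx]
    · obtain ⟨a, haI, ha⟩ := Submodule.exists_mem_ne_zero_of_ne_bot hI
      refine ⟨a, (hmem a).2 ha, Ideal.span {a}, Submodule.fg_span (Set.finite_singleton a), ?_, ?_⟩
      · rw [Ideal.span_le, Set.singleton_subset_iff]; exact haI
      · intro x hx
        exact Ideal.mem_span_singleton.2 ⟨x, rfl⟩
  · rintro ⟨s, hsS, h⟩
    have hs : s ≠ 0 := (hmem s).1 hsS
    set I : Ideal (MvPolynomial ℕ k) :=
      Ideal.span (MvPolynomial.X '' {i : ℕ | i ∉ s.vars}) with hIdef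
    obtain ⟨K, hKfg, hKI, hKmul⟩ := h I
    obtain ⟨T, hT⟩ := hKfg
    -- choose a fresh variable n
    obtain ⟨n, hn⟩ := Infinite.exists_notMem_finset (s.vars ∪ T.sup (fun g => g.vars))
    have hns : n ∉ s.vars := fun hc => hn (Finset.mem_union_left _ hc)
    have hnT : ∀ g ∈ T, n ∉ g.vars := fun g hg hc =>
      hn (Finset.mem_union_right _ (Finset.mem_of_subset (Finset.le_sup hg) hc))
    have hXnI : MvPolynomial.X n ∈ I := Ideal.subset_span ⟨n, hns, rfl⟩
    have hsXn : s * MvPolynomial.X n ∈ K := hKmul _ hXnI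
    -- the substitution X n ↦ 1
    set φ : MvPolynomial ℕ k →ₐ[k] MvPolynomial ℕ k :=
      MvPolynomial.aeval (fun i => if i = n then 1 else MvPolynomial.X i) with hφ
    have hφs : φ s = s := aux_aeval_fix _ s (fun i hi => by
      simp [if_neg (fun hc : i = n => hns (hc ▸ hi))])
    have hφg : ∀ g ∈ T, φ g = g := fun g hg => aux_aeval_fix _ g (fun i hi => by
      simp [if_neg (fun hc : i = n => hnT g hg (hc ▸ hi))])
    have hsK : s ∈ K := by
      have h1 : φ (s * MvPolynomial.X n) = s := by
        rw [map_mul, hφs]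
        simp [hφ]
      have h2 : φ (s * MvPolynomial.X n) ∈ Ideal.map (φ : MvPolynomial ℕ k →+* MvPolynomial ℕ k) K :=
        Ideal.mem_map_of_mem _ hsXn
      rw [h1, ← hT, Ideal.map_span] at h2
      have h3 : (φ : MvPolynomial ℕ k →+* MvPolynomial ℕ k) '' (T : Set (MvPolynomial ℕ k))
          = (T : Set (MvPolynomial ℕ k)) := by
        ext g
        constructor
        · rintro ⟨g', hg', rfl⟩
          rw [show ((φ : MvPolynomial ℕ k →+* MvPolynomial ℕ k) g' = g') from hφg g' hg']
          exact hg'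
        · intro hg
          exact ⟨g, hg, hφg g hg⟩
      rw [h3, hT] at h2
      exact h2
    have hsI : s ∈ I := hKI hsK
    -- the substitution killing all variables outside vars s
    set ρ : MvPolynomial ℕ k →ₐ[k] MvPolynomial ℕ k :=
      MvPolynomial.aeval (fun i => if i ∈ s.vars then MvPolynomial.X i else 0) with hρ
    have hρs : ρ s = s := aux_aeval_fix _ s (fun i hi => by simp [hi])
    have hρI : ρ s ∈ Ideal.map (ρ : MvPolynomial ℕ k →+* MvPolynomial ℕ k) I :=
      Ideal.mem_map_of_mem _ hsI
    rw [hIdef, Ideal.map_span] at hρI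
    have hzero : (ρ : MvPolynomial ℕ k →+* MvPolynomial ℕ k) ''
        (MvPolynomial.X '' {i : ℕ | i ∉ s.vars}) ⊆ {(0 : MvPolynomial ℕ k)} := by
      rintro - ⟨-, ⟨i, hi, rfl⟩, rfl⟩
      simp only [Set.mem_singleton_iff]
      show ρ (MvPolynomial.X i) = 0
      simp [hρ, if_neg hi]
    have : ρ s ∈ Ideal.span {(0 : MvPolynomial ℕ k)} :=
      Ideal.span_mono hzero hρI
    rw [Ideal.span_singleton_eq_bot.2 rfl] at this
    exact hs (by rwa [hρs, Ideal.mem_bot] at this)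
end

section
/- Let R be a commutative ring, S a multiplicative subset of R, and 0 → A → B → C → 0 a short exact sequence of R-modules. Then B is u-S-Noetherian if and only if both A and C are u-S-Noetherian. -/
lemma exists_fg_lift_of_fg_le_map {R B C : Type*} [CommRing R] [AddCommGroup B]
    [AddCommGroup C] [Module R B] [Module R C] (g : B →ₗ[R] C) (N : Submodule R B)
    (FC : Submodule R C) (hfg : FC.FG) (hle : FC ≤ N.map g) :
    ∃ F1 : Submodule R B, F1.FG ∧ F1 ≤ N ∧ FC ≤ F1.map g := by
  classical
  obtain ⟨T, hT⟩ := hfg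
  have hmem : ∀ t ∈ T, ∃ b, b ∈ N ∧ g b = t := by
    intro t ht
    have : t ∈ N.map g := hle (hT ▸ Submodule.subset_span ht)
    simpa [Submodule.mem_map] using this
  choose! b hbN hgb using hmem
  refine ⟨Submodule.span R (T.image b), ⟨T.image b, rfl⟩, ?_, ?_⟩
  · rw [Submodule.span_le]
    intro x hx
    simp only [Finset.coe_image, Set.mem_image, Finset.mem_coe] at hx
    obtain ⟨t, ht, rfl⟩ := hx
    exact hbN t ht
  · rw [← hT, Submodule.span_le]
    intro t ht
    rw [← hgb t ht]
    exact Submodule.mem_map_of_mem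
      (Submodule.subset_span (Finset.mem_coe.mpr (Finset.mem_image_of_mem b ht)))

/-- For a short exact sequence `0 → A → B → C → 0` of `R`-modules, `B` is `u`-`S`-Noetherian
iff both `A` and `C` are `u`-`S`-Noetherian. -/
theorem isUSNoetherianModule_iff_of_shortExact
    (R : Type*) [CommRing R] (S : Submonoid R)
    {A B C : Type*} [AddCommGroup A] [AddCommGroup B] [AddCommGroup C]
    [Module R A] [Module R B] [Module R C]
    (f : A →ₗ[R] B) (g : B →ₗ[R] C)
    (hf : Function.Injective f) (hfg : Function.Exact f g)
    (hg : Function.Surjective g) :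
    IsUSNoetherianModule R S B ↔
      IsUSNoetherianModule R S A ∧ IsUSNoetherianModule R S C := by
  constructor
  · rintro ⟨s, hs, h⟩
    constructor
    · refine ⟨s, hs, fun N => ?_⟩
      obtain ⟨F, hFfg, hFle, hF⟩ := h (N.map f)
      have hFrange : F ≤ LinearMap.range f := hFle.trans (LinearMap.map_le_range)
      refine ⟨F.comap f, ?_, ?_, ?_⟩
      · apply Submodule.fg_of_fg_map_injective f hf
        rwa [Submodule.map_comap_eq_self hFrange]
      · intro a haF
        obtain ⟨a', ha'N, ha'⟩ := hFle haF
        rwa [← hf ha']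
      · intro x hx
        have : s • f x ∈ F := hF (f x) (Submodule.mem_map_of_mem hx)
        simpa [Submodule.mem_comap, map_smul] using this
    · refine ⟨s, hs, fun N => ?_⟩
      obtain ⟨F, hFfg, hFle, hF⟩ := h (N.comap g)
      refine ⟨F.map g, hFfg.map g, ?_, ?_⟩
      · exact (Submodule.map_mono hFle).trans
          (le_of_eq (Submodule.map_comap_eq_of_surjective hg N))
      · intro x hx
        obtain ⟨bb, hbb⟩ := hg x
        have hbN : bb ∈ N.comap g := by simp [Submodule.mem_comap, hbb, hx]
        exact ⟨s • bb, hF bb hbN, by rw [map_smul, hbb]⟩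
  · rintro ⟨⟨sa, hsa, ha⟩, ⟨sc, hsc, hc⟩⟩
    refine ⟨sa * sc, S.mul_mem hsa hsc, fun N => ?_⟩
    obtain ⟨FA, hFAfg, hFAle, hFA⟩ := ha (N.comap f)
    obtain ⟨FC, hFCfg, hFCle, hFC⟩ := hc (N.map g)
    obtain ⟨F1, hF1fg, hF1le, hF1⟩ :=
      exists_fg_lift_of_fg_le_map g N FC hFCfg hFCle
    refine ⟨F1 ⊔ FA.map f, hF1fg.sup (hFAfg.map f), ?_, ?_⟩
    · refine sup_le hF1le ?_
      rintro bb ⟨a, haFA, rfl⟩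
      exact hFAle haFA
    · intro x hx
      have hgx : sc • g x ∈ FC := hFC (g x) (Submodule.mem_map_of_mem hx)
      obtain ⟨y, hyF1, hy⟩ := hF1 hgx
      have hk : g (sc • x - y) = 0 := by rw [map_sub, map_smul, hy, sub_self]
      obtain ⟨a, hfa⟩ := (hfg (sc • x - y)).mp hk
      have hfaN : f a ∈ N := by
        rw [hfa]
        exact N.sub_mem (N.smul_mem sc hx) (hF1le hyF1)
      have haA : a ∈ N.comap f := hfaN
      have hsaa : sa • a ∈ FA := hFA a haA
      have key : (sa * sc) • x = sa • y + f (sa • a) := by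
        rw [map_smul, hfa, mul_smul, smul_sub, ← add_sub_assoc]
        abel
      rw [key]
      exact Submodule.add_mem _
        (Submodule.mem_sup_left (F1.smul_mem sa hyF1))
        (Submodule.mem_sup_right (Submodule.mem_map_of_mem hsaa))
end

section
/- Let R be a commutative ring, S a multiplicative subset of R, and 0 → A →^f B →^g C → 0 a u-S-exact sequence of R-modules. Then B is u-S-Noetherian if and only if both A and C are u-S-Noetherian. -/
/-- A sequence `0 → A →[f] B →[g] C → 0` of `R`-modules is uniformly `S`-exact if there exists
`s ∈ S` with `s • ker f = 0`, `s • ker g ⊆ im f`, `s • im f ⊆ ker g` and `s • C ⊆ im g`. -/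
def IsUSExact {R : Type*} [CommRing R] (S : Submonoid R)
    {A B C : Type*} [AddCommGroup A] [AddCommGroup B] [AddCommGroup C]
    [Module R A] [Module R B] [Module R C]
    (f : A →ₗ[R] B) (g : B →ₗ[R] C) : Prop :=
  ∃ s ∈ S, (∀ x ∈ LinearMap.ker f, s • x = 0) ∧
    (∀ x ∈ LinearMap.ker g, s • x ∈ LinearMap.range f) ∧
    (∀ x ∈ LinearMap.range f, s • x ∈ LinearMap.ker g) ∧
    (∀ c : C, s • c ∈ LinearMap.range g)


lemma exists_fg_preimage {R A B : Type*} [CommRing R] [AddCommGroup A] [AddCommGroup B]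
    [Module R A] [Module R B] (f : A →ₗ[R] B) (N : Submodule R A) (F : Submodule R B)
    (hFG : F.FG) (hle : F ≤ N.map f) :
    ∃ F' : Submodule R A, F'.FG ∧ F' ≤ N ∧ F ≤ F'.map f := by
  obtain ⟨T, hT⟩ := hFG
  have hmem : ∀ y : T, ∃ a, a ∈ N ∧ f a = (y : B) := by
    intro y
    have : (y : B) ∈ N.map f := hle (hT ▸ Submodule.subset_span y.2)
    simpa [Submodule.mem_map] using this
  choose a haN hfa using hmem
  refine ⟨Submodule.span R (Set.range a), ?_, ?_, ?_⟩
  · exact Submodule.fg_span (Set.finite_range a)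
  · rw [Submodule.span_le]; rintro _ ⟨y, rfl⟩; exact haN y
  · rw [← hT, Submodule.span_le]
    intro y hy
    exact ⟨a ⟨y, hy⟩, Submodule.subset_span ⟨⟨y, hy⟩, rfl⟩, hfa ⟨y, hy⟩⟩

theorem isUSNoetherianModule_iff_of_isUSExact'
    (R : Type*) [CommRing R] (S : Submonoid R)
    {A B C : Type*} [AddCommGroup A] [AddCommGroup B] [AddCommGroup C]
    [Module R A] [Module R B] [Module R C]
    (f : A →ₗ[R] B) (g : B →ₗ[R] C) (h : ∃ s ∈ S, (∀ x ∈ LinearMap.ker f, s • x = 0) ∧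
    (∀ x ∈ LinearMap.ker g, s • x ∈ LinearMap.range f) ∧
    (∀ x ∈ LinearMap.range f, s • x ∈ LinearMap.ker g) ∧
    (∀ c : C, s • c ∈ LinearMap.range g)) :
    (∃ s ∈ S, ∀ N : Submodule R B, ∃ F : Submodule R B,
      F.FG ∧ F ≤ N ∧ ∀ x ∈ N, s • x ∈ F) ↔
      (∃ s ∈ S, ∀ N : Submodule R A, ∃ F : Submodule R A,
        F.FG ∧ F ≤ N ∧ ∀ x ∈ N, s • x ∈ F) ∧
      (∃ s ∈ S, ∀ N : Submodule R C, ∃ F : Submodule R C,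
        F.FG ∧ F ≤ N ∧ ∀ x ∈ N, s • x ∈ F) := by
  obtain ⟨s, hsS, h1, h2, h3, h4⟩ := h
  constructor
  · rintro ⟨t, htS, hB⟩
    constructor
    · -- A is u-S-Noetherian with witness s * t
      refine ⟨s * t, S.mul_mem hsS htS, fun N => ?_⟩
      obtain ⟨F, hFG, hle, hFt⟩ := hB (N.map f)
      obtain ⟨F', hF'fg, hF'N, hFle⟩ := exists_fg_preimage f N F hFG hle
      refine ⟨F', hF'fg, hF'N, fun x hx => ?_⟩
      have htfx : t • f x ∈ F := hFt (f x) (Submodule.mem_map_of_mem hx)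
      obtain ⟨y, hyF', hfy⟩ := Submodule.mem_map.mp (hFle htfx)
      have hker : t • x - y ∈ LinearMap.ker f := by
        rw [LinearMap.mem_ker, map_sub, map_smul, hfy, sub_self]
      have h0 : s • (t • x - y) = 0 := h1 _ hker
      rw [smul_sub, sub_eq_zero] at h0
      rw [mul_smul, h0]
      exact F'.smul_mem s hyF'
    · -- C is u-S-Noetherian with witness t * s
      refine ⟨t * s, S.mul_mem htS hsS, fun N => ?_⟩
      obtain ⟨F, hFG, hle, hFt⟩ := hB (N.comap g)
      refine ⟨F.map g, hFG.map g, Submodule.map_le_iff_le_comap.mpr hle, fun c hc => ?_⟩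
      obtain ⟨b, hb⟩ := h4 c
      have hbN : b ∈ N.comap g := by
        rw [Submodule.mem_comap, hb]; exact N.smul_mem s hc
      have : g (t • b) = (t * s) • c := by rw [map_smul, hb, mul_smul]
      exact this ▸ Submodule.mem_map_of_mem (hFt b hbN)
  · rintro ⟨⟨u, huS, hA⟩, ⟨v, hvS, hC⟩⟩
    refine ⟨u * s * v, S.mul_mem (S.mul_mem huS hsS) hvS, fun N => ?_⟩
    obtain ⟨Fa, hFafg, hFaN, hFau⟩ := hA (N.comap f)
    obtain ⟨Fc, hFcfg, hFcN, hFcv⟩ := hC (N.map g)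
    obtain ⟨F', hF'fg, hF'N, hFcle⟩ := exists_fg_preimage g N Fc hFcfg hFcN
    refine ⟨Fa.map f ⊔ F', (hFafg.map f).sup hF'fg,
      sup_le (Submodule.map_le_iff_le_comap.mpr hFaN) hF'N, fun x hx => ?_⟩
    have hvgx : v • g x ∈ Fc := hFcv (g x) (Submodule.mem_map_of_mem hx)
    obtain ⟨y, hyF', hgy⟩ := Submodule.mem_map.mp (hFcle hvgx)
    have hker : v • x - y ∈ LinearMap.ker g := by
      rw [LinearMap.mem_ker, map_sub, map_smul, hgy, sub_self]
    obtain ⟨a, ha⟩ := h2 _ hker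
    have haN : a ∈ N.comap f := by
      rw [Submodule.mem_comap, ha, smul_sub]
      exact N.sub_mem (N.smul_mem s (N.smul_mem v hx)) (N.smul_mem s (hF'N hyF'))
    have hua : u • a ∈ Fa := hFau a haN
    have key : (u * s * v) • x = u • (s • (v • x - y)) + (u * s) • y := by
      rw [smul_sub, smul_sub, mul_smul, mul_smul, mul_smul]
      abel
    rw [key]
    refine Submodule.add_mem _ (Submodule.mem_sup_left ?_) (Submodule.mem_sup_right ?_)
    · exact ⟨u • a, hua, by rw [map_smul, ha]⟩
    · exact F'.smul_mem (u * s) hyF'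

/-- For a `u`-`S`-exact sequence `0 → A → B → C → 0` of `R`-modules, `B` is `u`-`S`-Noetherian
iff both `A` and `C` are `u`-`S`-Noetherian. -/
theorem isUSNoetherianModule_iff_of_isUSExact
    (R : Type*) [CommRing R] (S : Submonoid R)
    {A B C : Type*} [AddCommGroup A] [AddCommGroup B] [AddCommGroup C]
    [Module R A] [Module R B] [Module R C]
    (f : A →ₗ[R] B) (g : B →ₗ[R] C) (h : IsUSExact S f g) :
    IsUSNoetherianModule R S B ↔
      IsUSNoetherianModule R S A ∧ IsUSNoetherianModule R S C := by
  exact isUSNoetherianModule_iff_of_isUSExact' R S f g h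
end

section
/- Let R be a commutative ring and M an R-module. Then the following are equivalent: (1) M is a Noetherian R-module; (2) for every prime ideal 𝔭 of R, M is u-(R∖𝔭)-Noetherian; (3) for every maximal ideal 𝔪 of R, M is u-(R∖𝔪)-Noetherian. -/
lemma noetherian_to_us (R : Type*) [CommRing R] (S : Submonoid R)
    (M : Type*) [AddCommGroup M] [Module R M] [IsNoetherian R M] :
    IsUSNoetherianModule R S M :=
  ⟨1, S.one_mem, fun N => ⟨N, IsNoetherian.noetherian N, le_refl N,
    fun x hx => by simpa using hx⟩⟩

lemma max_us_to_noetherian (R : Type*) [CommRing R]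
    (M : Type*) [AddCommGroup M] [Module R M]
    (h : ∀ (𝔪 : Ideal R) (h𝔪 : 𝔪.IsMaximal),
      IsUSNoetherianModule R (@Ideal.primeCompl R _ 𝔪 h𝔪.isPrime) M) :
    IsNoetherian R M := by
  rw [isNoetherian_def]
  intro N
  set J : Ideal R :=
    { carrier := {r | ∃ F : Submodule R M, F.FG ∧ F ≤ N ∧ ∀ x ∈ N, r • x ∈ F}
      zero_mem' := ⟨⊥, Submodule.fg_bot, bot_le, fun x _ => by simp⟩
      add_mem' := by
        rintro a b ⟨F₁, hF₁, hle₁, hm₁⟩ ⟨F₂, hF₂, hle₂, hm₂⟩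
        exact ⟨F₁ ⊔ F₂, hF₁.sup hF₂, sup_le hle₁ hle₂,
          fun x hx => by
            rw [add_smul]
            exact add_mem (Submodule.mem_sup_left (hm₁ x hx))
              (Submodule.mem_sup_right (hm₂ x hx))⟩
      smul_mem' := by
        rintro c a ⟨F, hF, hle, hm⟩
        exact ⟨F, hF, hle, fun x hx => by
          rw [smul_eq_mul, mul_smul]
          exact F.smul_mem c (hm x hx)⟩ } with hJdef
  have hJ : J = ⊤ := by
    by_contra hne
    obtain ⟨𝔪, hm, hle⟩ := Ideal.exists_le_maximal J hne
    obtain ⟨s, hs, hprop⟩ := h 𝔪 hm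
    obtain ⟨F, hFG, hFle, hmem⟩ := hprop N
    have hsJ : s ∈ J := ⟨F, hFG, hFle, hmem⟩
    exact hs (hle hsJ)
  have h1 : (1 : R) ∈ J := hJ ▸ Submodule.mem_top
  obtain ⟨F, hFG, hFle, hmem⟩ := h1
  have : N = F := le_antisymm (fun x hx => by simpa using hmem x hx) hFle
  rw [this]; exact hFG

/-- Local characterization of Noetherian modules: `M` is Noetherian iff `M` is
`u`-`(R \ 𝔭)`-Noetherian for every prime `𝔭`, iff `M` is `u`-`(R \ 𝔪)`-Noetherian for
every maximal ideal `𝔪`. -/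
theorem isNoetherian_iff_usNoetherian_at_primes_and_maximals
    (R : Type*) [CommRing R] (M : Type*) [AddCommGroup M] [Module R M] :
    (IsNoetherian R M ↔
      ∀ (𝔭 : Ideal R) (h𝔭 : 𝔭.IsPrime), IsUSNoetherianModule R (𝔭.primeCompl) M) ∧
    (IsNoetherian R M ↔
      ∀ (𝔪 : Ideal R) (h𝔪 : 𝔪.IsMaximal),
        IsUSNoetherianModule R (@Ideal.primeCompl R _ 𝔪 h𝔪.isPrime) M) := by
  constructor
  · constructor
    · intro hN 𝔭 h𝔭; exact noetherian_to_us R _ M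
    · intro h; exact max_us_to_noetherian R M fun 𝔪 h𝔪 => h 𝔪 h𝔪.isPrime
  · constructor
    · intro hN 𝔪 h𝔪; exact noetherian_to_us R _ M
    · exact max_us_to_noetherian R M
end

section
/- Let R be a commutative ring, S a multiplicative subset of R, and M an R-module. Let R(+)M denote the trivial extension of R by M and S(+)M = {(s, m) : s ∈ S, m ∈ M}, which is a multiplicative subset of R(+)M. Then R(+)M is a u-(S(+)M)-Noetherian ring if and only if R is a u-S-Noetherian ring and M is a u-S-Noetherian R-module. -/
theorem IsUSNoetherianRing.of_surjective {A B : Type*} [CommRing A] [CommRing B]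
    {U : Submonoid A} {S : Submonoid B} (f : A →+* B) (hf : Function.Surjective f)
    (hUS : U.map f ≤ S) (h : IsUSNoetherianRing A U) : IsUSNoetherianRing B S := by
  obtain ⟨u, hu, hU⟩ := h
  refine ⟨f u, hUS ⟨u, hu, rfl⟩, fun I => ?_⟩
  obtain ⟨K, hKfg, hKI, hK⟩ := hU (I.comap f)
  refine ⟨K.map f, hKfg.map f, Ideal.map_le_iff_le_comap.mpr hKI, fun y hy => ?_⟩
  obtain ⟨x, rfl⟩ := hf y
  simpa using Ideal.mem_map_of_mem f (hK x hy)

theorem Ideal.exists_fg_le_map_eq {A B : Type*} [CommRing A] [CommRing B] {f : A →+* B}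
    (hf : Function.Surjective f) {J : Ideal A} {K : Ideal B} (hK : K.FG) (hKJ : K ≤ J.map f) :
    ∃ K₁ : Ideal A, K₁.FG ∧ K₁ ≤ J ∧ K₁.map f = K := by
  classical
  obtain ⟨G, rfl⟩ := hK
  have hG : (G : Set B) ⊆ f '' J := fun b hb =>
    (Ideal.mem_map_iff_of_surjective f hf).1 (hKJ (Ideal.subset_span hb))
  obtain ⟨G₁, hG₁J, rfl⟩ := Finset.subset_set_image_iff.1 hG
  exact ⟨Ideal.span G₁, ⟨G₁, rfl⟩, Ideal.span_le.2 hG₁J, by simp [Ideal.map_span]⟩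

/-- Uniform bounds compose along `0 → J ⊓ L → J → J / (J ⊓ L) → 0`: `a` is a bound for `J`
modulo `L`, and `t` one for `J ⊓ L`. -/
theorem Ideal.mul_mem_sup_of_mem_sup_of_mem_inf {A : Type*} [CommRing A]
    {J K₁ K₂ L : Ideal A} {a t : A} (hK₁ : K₁ ≤ J) (h₁ : ∀ x ∈ J, a * x ∈ K₁ ⊔ L)
    (h₂ : ∀ x ∈ J ⊓ L, t * x ∈ K₂) : ∀ x ∈ J, t * a * x ∈ K₁ ⊔ K₂ := by
  intro x hx
  obtain ⟨y, hy, k, hk, hyk⟩ := Submodule.mem_sup.1 (h₁ x hx)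
  have hkJ : k ∈ J := by
    rw [eq_sub_of_add_eq' hyk]
    exact J.sub_mem (J.mul_mem_left a hx) (hK₁ hy)
  rw [mul_assoc, ← hyk, mul_add]
  exact Submodule.add_mem_sup (K₁.mul_mem_left t hy) (h₂ k ⟨hkJ, hk⟩)

namespace TrivSqZeroExt

variable {R M : Type*} [CommRing R] [AddCommGroup M] [Module R M] [Module Rᵐᵒᵖ M]
  [IsCentralScalar R M]

def idealOfSubmodule (N : Submodule R M) : Ideal (TrivSqZeroExt R M) where
  carrier := {x | x.fst = 0 ∧ x.snd ∈ N}
  add_mem' ha hb := ⟨by simp [ha.1, hb.1], by simpa using N.add_mem ha.2 hb.2⟩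
  zero_mem' := ⟨fst_zero, N.zero_mem⟩
  smul_mem' c x hx := ⟨by simp [hx.1], by simpa [hx.1] using N.smul_mem c.fst hx.2⟩

theorem mem_idealOfSubmodule {N : Submodule R M} {x : TrivSqZeroExt R M} :
    x ∈ idealOfSubmodule N ↔ x.fst = 0 ∧ x.snd ∈ N :=
  Iff.rfl

theorem span_le_idealOfSubmodule_span_snd {G : Set (TrivSqZeroExt R M)}
    (hG : ∀ g ∈ G, g.fst = 0) :
    Ideal.span G ≤ idealOfSubmodule (Submodule.span R (snd '' G)) :=
  Ideal.span_le.2 fun g hg => ⟨hG g hg, Submodule.subset_span ⟨g, hg, rfl⟩⟩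

def submoduleOfIdeal (J : Ideal (TrivSqZeroExt R M)) : Submodule R M :=
  (J.restrictScalars R).comap (inrHom R M)

theorem mem_submoduleOfIdeal {J : Ideal (TrivSqZeroExt R M)} {m : M} :
    m ∈ submoduleOfIdeal J ↔ inr m ∈ J :=
  Iff.rfl

theorem inr_mem_span_image_inr {G : Set M} {m : M} (hm : m ∈ Submodule.span R G) :
    inr m ∈ Ideal.span (inr '' G : Set (TrivSqZeroExt R M)) := by
  have := Submodule.mem_map_of_mem (f := inrHom R M) hm
  rw [Submodule.map_span] at this
  exact Submodule.span_le_restrictScalars R (TrivSqZeroExt R M) _ this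

theorem isUSNoetherianModule_of_isUSNoetherianRing {S : Submonoid R}
    {SM : Submonoid (TrivSqZeroExt R M)} (hSM : ∀ x ∈ SM, x.fst ∈ S)
    (h : IsUSNoetherianRing (TrivSqZeroExt R M) SM) : IsUSNoetherianModule R S M := by
  obtain ⟨u, hu, hU⟩ := h
  refine ⟨u.fst, hSM u hu, fun N => ?_⟩
  obtain ⟨K, ⟨G, rfl⟩, hKN, hK⟩ := hU (idealOfSubmodule N)
  have hG : ∀ g ∈ (G : Set (TrivSqZeroExt R M)), g.fst = 0 ∧ g.snd ∈ N := fun g hg =>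
    mem_idealOfSubmodule.1 (hKN (Ideal.subset_span hg))
  refine ⟨Submodule.span R (snd '' (G : Set (TrivSqZeroExt R M))),
    Submodule.fg_span (G.finite_toSet.image snd), Submodule.span_le.2 ?_, fun n hn => ?_⟩
  · rintro _ ⟨g, hg, rfl⟩
    exact (hG g hg).2
  · have hun := span_le_idealOfSubmodule_span_snd (fun g hg => (hG g hg).1)
      (hK (inr n) (mem_idealOfSubmodule.2 ⟨fst_inr R n, by simpa using hn⟩))
    simpa using (mem_idealOfSubmodule.1 hun).2

theorem isUSNoetherianRing_of_isUSNoetherianModule {S : Submonoid R}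
    {SM : Submonoid (TrivSqZeroExt R M)} (hSM : ∀ x : TrivSqZeroExt R M, x.fst ∈ S → x ∈ SM)
    (hR : IsUSNoetherianRing R S) (hM : IsUSNoetherianModule R S M) :
    IsUSNoetherianRing (TrivSqZeroExt R M) SM := by
  obtain ⟨s₁, hs₁, hR⟩ := hR
  obtain ⟨s₂, hs₂, hM⟩ := hM
  let f : TrivSqZeroExt R M →+* R := fstHom R R M
  have hf : Function.Surjective f := fun r => ⟨inl r, fst_inl M r⟩
  refine ⟨inl (s₂ * s₁), hSM _ (S.mul_mem hs₂ hs₁), fun J => ?_⟩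
  obtain ⟨K, hKfg, hKJ, hK⟩ := hR (J.map f)
  obtain ⟨K₁, hK₁fg, hK₁J, rfl⟩ := Ideal.exists_fg_le_map_eq hf hKfg hKJ
  obtain ⟨F, ⟨GF, rfl⟩, hFJ, hF⟩ := hM (submoduleOfIdeal J)
  let K₂ : Ideal (TrivSqZeroExt R M) := Ideal.span (inr '' GF)
  have hK₂J : K₂ ≤ J := Ideal.span_le.2 fun _ ⟨m, hm, hmx⟩ =>
    hmx ▸ mem_submoduleOfIdeal.1 (hFJ (Submodule.subset_span hm))
  refine ⟨K₁ ⊔ K₂, Submodule.FG.sup hK₁fg (Submodule.fg_span (GF.finite_toSet.image _)),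
    sup_le hK₁J hK₂J, ?_⟩
  rw [inl_mul]
  refine Ideal.mul_mem_sup_of_mem_sup_of_mem_inf (L := RingHom.ker f) hK₁J (fun x hx => ?_)
    fun x ⟨hxJ, hx0⟩ => ?_
  · rw [RingHom.ker_eq_comap_bot, ← Ideal.comap_map_of_surjective f hf, Ideal.mem_comap]
    simpa [f] using hK (f x) (Ideal.mem_map_of_mem f hx)
  · rw [(mem_kerIdeal_iff_inr R M x).1 hx0] at hxJ ⊢
    rw [inl_mul_inr]
    exact inr_mem_span_image_inr (hF _ (mem_submoduleOfIdeal.2 hxJ))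

end TrivSqZeroExt

open TrivSqZeroExt

/-- The trivial extension `R(+)M` is `u`-`(S(+)M)`-Noetherian iff `R` is `u`-`S`-Noetherian
and `M` is a `u`-`S`-Noetherian `R`-module.  Here `R(+)M` is realized as `TrivSqZeroExt R M`
(with the canonical central `Rᵐᵒᵖ`-action on `M`), and `S(+)M` is the multiplicative subset
of pairs whose first component lies in `S`. -/
theorem trivSqZeroExt_isUSNoetherianRing_iff
    (R : Type*) [CommRing R] (S : Submonoid R)
    (M : Type*) [AddCommGroup M] [Module R M] :
    letI : Module Rᵐᵒᵖ M := Module.compHom M ((RingHom.id R).fromOpposite mul_comm)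
    letI : IsCentralScalar R M := ⟨fun _ _ => rfl⟩
    ∀ SM : Submonoid (TrivSqZeroExt R M),
      (SM : Set (TrivSqZeroExt R M)) = {x : TrivSqZeroExt R M | x.fst ∈ S} →
      (IsUSNoetherianRing (TrivSqZeroExt R M) SM ↔
        IsUSNoetherianRing R S ∧ IsUSNoetherianModule R S M) := by
  let : Module Rᵐᵒᵖ M := Module.compHom M ((RingHom.id R).fromOpposite mul_comm)
  let : IsCentralScalar R M := ⟨fun _ _ => rfl⟩
  intro SM hSM
  have hmem (x : TrivSqZeroExt R M) : x ∈ SM ↔ x.fst ∈ S := Set.ext_iff.1 hSM x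
  refine ⟨fun h => ⟨?_, isUSNoetherianModule_of_isUSNoetherianRing (fun x => (hmem x).1) h⟩,
    fun ⟨hR, hM⟩ => isUSNoetherianRing_of_isUSNoetherianModule (fun x => (hmem x).2) hR hM⟩
  exact h.of_surjective (fstHom R R M) (fun r => ⟨inl r, fst_inl M r⟩)
    (Submonoid.map_le_iff_le_comap.2 fun x hx => Submonoid.mem_comap.2 ((hmem x).1 hx))
end

section
/- Let α : A → C be a ring homomorphism and β : B → C a surjective ring homomorphism between commutative rings, and let D = {(a, b) ∈ A × B : α(a) = β(b)} be the pullback of α and β, a subring of A × B with projections p_A : D → A and p_B : D → B. Let S be a multiplicative subset of D. Then D is a u-S-Noetherian ring if and only if A is a u-p_A(S)-Noetherian ring and ker(β) is a u-S-Noetherian D-module, where ker(β) is regarded as a D-module via restriction of scalars along p_B (i.e., (a,b)•x = b·x for x ∈ ker(β)). -/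
/-- The pullback `D = {(a, b) ∈ A × B : α a = β b}` of two ring homomorphisms
`α : A → C` and `β : B → C`, as a subring of `A × B`. -/
def ringPullback {A B C : Type*} [CommRing A] [CommRing B] [CommRing C]
    (α : A →+* C) (β : B →+* C) : Subring (A × B) where
  carrier := {x : A × B | α x.1 = β x.2}
  mul_mem' := by intro x y hx hy; simp_all [map_mul]
  one_mem' := by simp
  add_mem' := by intro x y hx hy; simp_all [map_add]
  zero_mem' := by simp
  neg_mem' := by intro x hx; simp_all [map_neg]

set_option maxHeartbeats 1000000 in
set_option synthInstance.maxHeartbeats 400000 in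
/-- Pullbacks of `u`-`S`-Noetherian rings: with `D` the pullback of `α : A → C` and a
surjective `β : B → C`, and `S` a multiplicative subset of `D`, the ring `D` is
`u`-`S`-Noetherian iff `A` is `u`-`p_A(S)`-Noetherian and `ker β` is a `u`-`S`-Noetherian
`D`-module (via restriction of scalars along `p_B`). -/
theorem ringPullback_isUSNoetherianRing_iff
    {A B C : Type*} [CommRing A] [CommRing B] [CommRing C]
    (α : A →+* C) (β : B →+* C) (hβ : Function.Surjective β)
    (S : Submonoid (ringPullback α β)) :
    letI pA : (ringPullback α β) →+* A := (RingHom.fst A B).comp (ringPullback α β).subtype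
    letI pB : (ringPullback α β) →+* B := (RingHom.snd A B).comp (ringPullback α β).subtype
    letI : Module (ringPullback α β) (RingHom.ker β) := Module.compHom (RingHom.ker β) pB
    (IsUSNoetherianRing (ringPullback α β) S ↔
      IsUSNoetherianRing A (S.map pA.toMonoidHom) ∧
        IsUSNoetherianModule (ringPullback α β) S (RingHom.ker β)) := by
  classical
  set pA : (ringPullback α β) →+* A := (RingHom.fst A B).comp (ringPullback α β).subtype
    with hpAdef
  set pB : (ringPullback α β) →+* B := (RingHom.snd A B).comp (ringPullback α β).subtype
    with hpBdef
  letI instMod : Module (ringPullback α β) (RingHom.ker β) := Module.compHom (RingHom.ker β) pB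
  have hker : ∀ x : RingHom.ker β, ((0, (x : B)) : A × B) ∈ ringPullback α β := by
    intro x
    have hx : β (x : B) = 0 := x.2
    show α 0 = β (x : B)
    simp [hx]
  let ψ : RingHom.ker β →ₗ[ringPullback α β] (ringPullback α β) :=
    { toFun := fun x => ⟨(0, (x : B)), hker x⟩
      map_add' := by
        intro x y
        apply Subtype.ext
        apply Prod.ext <;> simp
      map_smul' := by
        intro d x
        apply Subtype.ext
        apply Prod.ext
        · show (0 : A) = (d : A × B).1 * 0
          simp
        · show pB d * (x : B) = (d : A × B).2 * (x : B)
          rfl }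
  have hψinj : Function.Injective ψ := by
    intro x y h
    have h2 := congrArg (fun z : ringPullback α β => (z : A × B).2) h
    exact Subtype.ext h2
  have hpA : Function.Surjective pA := by
    intro a
    obtain ⟨b, hb⟩ := hβ (α a)
    exact ⟨⟨(a, b), hb.symm⟩, rfl⟩
  constructor
  · rintro ⟨s, hs, hSN⟩
    constructor
    · refine ⟨pA s, ⟨s, hs, rfl⟩, ?_⟩
      intro I
      obtain ⟨K, hKfg, hKle, hK⟩ := hSN (Ideal.comap pA I)
      refine ⟨Ideal.map pA K, Ideal.FG.map hKfg pA, Ideal.map_le_iff_le_comap.mpr hKle, ?_⟩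
      intro x hx
      obtain ⟨d, rfl⟩ := hpA x
      have hd : d ∈ Ideal.comap pA I := hx
      have h1 : s * d ∈ K := hK d hd
      have h2 : pA (s * d) ∈ Ideal.map pA K := Ideal.mem_map_of_mem pA h1
      simpa [map_mul] using h2
    · refine ⟨s, hs, ?_⟩
      intro N
      obtain ⟨K, hKfg, hKle, hK⟩ := hSN (Submodule.map ψ N)
      refine ⟨Submodule.comap ψ K, ?_, ?_, ?_⟩
      · apply Submodule.fg_of_fg_map_injective ψ hψinj
        have hmc : Submodule.map ψ (Submodule.comap ψ K) = K := by
          rw [Submodule.map_comap_eq]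
          exact inf_eq_right.mpr (le_trans hKle (LinearMap.map_le_range))
        rw [hmc]; exact hKfg
      · intro x hx
        obtain ⟨y, hy, hxy⟩ := hKle hx
        exact hψinj hxy ▸ hy
      · intro x hx
        have h1 : ψ x ∈ Submodule.map ψ N := Submodule.mem_map_of_mem hx
        have h2 : s * ψ x ∈ K := hK _ h1
        show ψ (s • x) ∈ K
        rw [map_smul, smul_eq_mul]
        exact h2
  · rintro ⟨⟨u, huS, hA2⟩, s₂, hs₂, hM⟩
    obtain ⟨s₁, hs₁, rfl⟩ := huS
    refine ⟨s₁ * s₂, mul_mem hs₁ hs₂, ?_⟩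
    intro I
    obtain ⟨KA, hKAfg, hKAle, hKA⟩ := hA2 (Ideal.map pA I)
    obtain ⟨F, hFfg, hFle, hF⟩ := hM (Submodule.comap ψ I)
    obtain ⟨T, hT⟩ := hKAfg
    have hlift : ∀ a : A, ∃ d : ringPullback α β, a ∈ Ideal.map pA I → d ∈ I ∧ pA d = a := by
      intro a
      by_cases h : a ∈ Ideal.map pA I
      · obtain ⟨d, hd, hda⟩ := (Ideal.mem_map_iff_of_surjective pA hpA).mp h
        exact ⟨d, fun _ => ⟨hd, hda⟩⟩
      · exact ⟨0, fun h' => absurd h' h⟩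
    choose lift hlift using hlift
    have hTmem : ∀ t ∈ (T : Set A), t ∈ Ideal.map pA I := by
      intro t ht
      apply hKAle
      rw [← hT]
      exact Ideal.subset_span ht
    set K₁ : Ideal (ringPullback α β) := Ideal.span (lift '' (T : Set A)) with hK₁def
    have hK₁fg : K₁.FG := Submodule.fg_span (T.finite_toSet.image lift)
    have hK₁le : K₁ ≤ I := by
      rw [hK₁def, Ideal.span_le]
      rintro _ ⟨t, ht, rfl⟩
      exact (hlift t (hTmem t ht)).1
    have hmapK₁ : Ideal.map pA K₁ = KA := by
      rw [hK₁def, Ideal.map_span, ← hT]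
      congr 1
      ext a
      constructor
      · rintro ⟨_, ⟨t, ht, rfl⟩, rfl⟩
        rw [(hlift t (hTmem t ht)).2]
        exact ht
      · intro ha
        exact ⟨lift a, ⟨a, ha, rfl⟩, (hlift a (hTmem a ha)).2⟩
    have hψFle : Submodule.map ψ F ≤ I := by
      rintro _ ⟨x, hx, rfl⟩
      exact hFle hx
    refine ⟨K₁ ⊔ Submodule.map ψ F, Submodule.FG.sup hK₁fg (Submodule.FG.map ψ hFfg),
      sup_le hK₁le hψFle, ?_⟩
    intro x hx
    have h1 : pA s₁ * pA x ∈ KA := hKA (pA x) (Ideal.mem_map_of_mem pA hx)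
    have h2 : pA (s₁ * x) ∈ Ideal.map pA K₁ := by
      rw [map_mul, hmapK₁]
      exact h1
    obtain ⟨k, hk, hk2⟩ := (Ideal.mem_map_iff_of_surjective pA hpA).mp h2
    set y : ringPullback α β := s₁ * x - k with hydef
    have hyI : y ∈ I := I.sub_mem (I.mul_mem_left s₁ hx) (hK₁le hk)
    have hy1 : ((y : A × B)).1 = 0 := by
      show pA y = 0
      rw [hydef, map_sub, hk2, sub_self]
    have hy2 : ((y : A × B)).2 ∈ RingHom.ker β := by
      rw [RingHom.mem_ker]
      have hmem : α ((y : A × B)).1 = β ((y : A × B)).2 := y.2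
      rw [← hmem, hy1, map_zero]
    set b : RingHom.ker β := ⟨((y : A × B)).2, hy2⟩ with hbdef
    have hψb : ψ b = y := by
      apply Subtype.ext
      apply Prod.ext
      · exact hy1.symm
      · rfl
    have hbN : b ∈ Submodule.comap ψ I := by
      show ψ b ∈ I
      rw [hψb]; exact hyI
    have h3 : s₂ • b ∈ F := hF b hbN
    have h5 : s₂ * y ∈ K₁ ⊔ Submodule.map ψ F := by
      have h4 : ψ (s₂ • b) ∈ Submodule.map ψ F := Submodule.mem_map_of_mem h3
      have heq : ψ (s₂ • b) = s₂ * y := by rw [map_smul, smul_eq_mul, hψb]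
      exact Submodule.mem_sup_right (heq ▸ h4)
    have h6 : s₂ * k ∈ K₁ ⊔ Submodule.map ψ F := Submodule.mem_sup_left (K₁.mul_mem_left s₂ hk)
    have heq : (s₁ * s₂ : ringPullback α β) * x = s₂ * y + s₂ * k := by
      rw [hydef]; ring
    rw [heq]
    exact Submodule.add_mem _ h5 h6
end

section
/- Let α : R → R' be a surjective homomorphism of commutative rings and S a multiplicative subset of R. If R is a u-S-Noetherian ring, then R' is a u-α(S)-Noetherian ring. -/
/-- If `α : R → R'` is a surjective ring homomorphism and `R` is `u`-`S`-Noetherian, then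
`R'` is `u`-`α(S)`-Noetherian. -/
theorem isUSNoetherianRing_of_surjective
    {R R' : Type*} [CommRing R] [CommRing R'] (α : R →+* R')
    (hα : Function.Surjective α) (S : Submonoid R)
    (h : IsUSNoetherianRing R S) :
    IsUSNoetherianRing R' (S.map α.toMonoidHom) := by
  obtain ⟨s, hs, hN⟩ := h
  refine ⟨α s, ⟨s, hs, rfl⟩, fun I => ?_⟩
  obtain ⟨K, hKfg, hKle, hK⟩ := hN (I.comap α)
  refine ⟨K.map α, hKfg.map _, Ideal.map_le_iff_le_comap.mpr hKle, ?_⟩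
  · intro y hy
    obtain ⟨x, rfl⟩ := hα y
    rw [← map_mul]
    exact Ideal.mem_map_of_mem α (hK x hy)
end

section
/- Let f : A → B be a homomorphism of commutative rings, J an ideal of B, and S a multiplicative subset of A. Let A ⋈^f J = {(a, f(a)+j) : a ∈ A, j ∈ J}, a subring of A × B, let S' = {(s, f(s)) : s ∈ S}, a multiplicative subset of A ⋈^f J, and let f(S) = {f(s) : s ∈ S}, a multiplicative subset of the subring f(A)+J of B. Then A ⋈^f J is a u-S'-Noetherian ring if and only if A is a u-S-Noetherian ring and f(A)+J is a u-f(S)-Noetherian ring. -/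
/-- The amalgamation `A ⋈^f J = {(a, f a + j) : a ∈ A, j ∈ J}` of `A` with `B` along the
ideal `J` with respect to `f`, as a subring of `A × B`. -/
def amalgamation {A B : Type*} [CommRing A] [CommRing B] (f : A →+* B) (J : Ideal B) :
    Subring (A × B) where
  carrier := {x : A × B | x.2 - f x.1 ∈ J}
  mul_mem' := by
    intro x y hx hy
    have h : x.2 * y.2 - f (x.1 * y.1) = x.2 * (y.2 - f y.1) + (x.2 - f x.1) * f y.1 := by
      rw [map_mul]; ring
    show x.2 * y.2 - f (x.1 * y.1) ∈ J
    rw [h]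
    exact J.add_mem (J.mul_mem_left _ hy) (J.mul_mem_right _ hx)
  one_mem' := by simp
  add_mem' := by
    intro x y hx hy
    have h : x.2 + y.2 - f (x.1 + y.1) = (x.2 - f x.1) + (y.2 - f y.1) := by
      rw [map_add]; ring
    show x.2 + y.2 - f (x.1 + y.1) ∈ J
    rw [h]
    exact J.add_mem hx hy
  zero_mem' := by simp
  neg_mem' := by
    intro x hx
    have h : -x.2 - f (-x.1) = -(x.2 - f x.1) := by rw [map_neg]; ring
    show -x.2 - f (-x.1) ∈ J
    rw [h]
    exact J.neg_mem hx

/-- The subring `f(A) + J` of `B`. -/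
def imageAddIdeal {A B : Type*} [CommRing A] [CommRing B] (f : A →+* B) (J : Ideal B) :
    Subring B where
  carrier := {b : B | ∃ a : A, b - f a ∈ J}
  mul_mem' := by
    rintro x y ⟨a, ha⟩ ⟨b, hb⟩
    refine ⟨a * b, ?_⟩
    have h : x * y - f (a * b) = x * (y - f b) + (x - f a) * f b := by
      rw [map_mul]; ring
    rw [h]
    exact J.add_mem (J.mul_mem_left _ hb) (J.mul_mem_right _ ha)
  one_mem' := ⟨1, by simp⟩
  add_mem' := by
    rintro x y ⟨a, ha⟩ ⟨b, hb⟩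
    refine ⟨a + b, ?_⟩
    have h : x + y - f (a + b) = (x - f a) + (y - f b) := by rw [map_add]; ring
    rw [h]
    exact J.add_mem ha hb
  zero_mem' := ⟨0, by simp⟩
  neg_mem' := by
    rintro x ⟨a, ha⟩
    refine ⟨-a, ?_⟩
    have h : -x - f (-a) = -(x - f a) := by rw [map_neg]; ring
    rw [h]
    exact J.neg_mem ha

section AmalgAux
variable {A B : Type*} [CommRing A] [CommRing B] (f : A →+* B) (J : Ideal B)

/-- First projection from the amalgamation. -/
def amalgProj1 : amalgamation f J →+* A := (RingHom.fst A B).comp (amalgamation f J).subtype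

/-- Second projection from the amalgamation into `f(A) + J`. -/
def amalgProj2 : amalgamation f J →+* imageAddIdeal f J :=
  RingHom.codRestrict ((RingHom.snd A B).comp (amalgamation f J).subtype) (imageAddIdeal f J)
    (fun x => ⟨(x : A × B).1, x.2⟩)

lemma amalgProj1_surjective : Function.Surjective (amalgProj1 f J) :=
  fun a => ⟨⟨(a, f a), show f a - f a ∈ J by simp⟩, rfl⟩

lemma amalgProj2_surjective : Function.Surjective (amalgProj2 f J) := by
  rintro ⟨b, a, h⟩
  exact ⟨⟨(a, b), h⟩, rfl⟩

lemma amalg_ext {x y : amalgamation f J} (h1 : amalgProj1 f J x = amalgProj1 f J y)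
    (h2 : amalgProj2 f J x = amalgProj2 f J y) : x = y :=
  Subtype.ext (Prod.ext h1 (congrArg Subtype.val h2))

/-- Pushing a uniform `S`-Noetherian witness through a surjective ring hom. -/
lemma uSN_of_surjective {R T : Type*} [CommRing R] [CommRing T] (g : R →+* T)
    (hg : Function.Surjective g) (u : R)
    (h : ∀ I : Ideal R, ∃ K : Ideal R, K.FG ∧ K ≤ I ∧ ∀ x ∈ I, u * x ∈ K) :
    ∀ I : Ideal T, ∃ K : Ideal T, K.FG ∧ K ≤ I ∧ ∀ x ∈ I, g u * x ∈ K := by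
  intro I
  obtain ⟨K, hKfg, hKle, hK⟩ := h (I.comap g)
  refine ⟨K.map g, hKfg.map g, ?_, ?_⟩
  · rw [Ideal.map_le_iff_le_comap]
    exact le_trans hKle le_rfl
  · intro x hx
    obtain ⟨r, rfl⟩ := hg x
    rw [← map_mul]
    exact Ideal.mem_map_of_mem g (hK r hx)

end AmalgAux

set_option maxHeartbeats 1000000 in
set_option synthInstance.maxHeartbeats 200000 in
/-- The amalgamation `A ⋈^f J` is `u`-`S'`-Noetherian iff `A` is `u`-`S`-Noetherian and
`f(A) + J` is `u`-`f(S)`-Noetherian, where `S' = {(s, f s) : s ∈ S}` and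
`f(S) = {f s : s ∈ S}`. -/
theorem amalgamation_isUSNoetherianRing_iff
    {A B : Type*} [CommRing A] [CommRing B] (f : A →+* B) (J : Ideal B)
    (S : Submonoid A)
    (S' : Submonoid (amalgamation f J))
    (hS' : (S' : Set (amalgamation f J)) =
      {x : amalgamation f J | (x : A × B).1 ∈ S ∧ (x : A × B).2 = f (x : A × B).1})
    (fS : Submonoid (imageAddIdeal f J))
    (hfS : (fS : Set (imageAddIdeal f J)) =
      {x : imageAddIdeal f J | ∃ s ∈ S, (x : B) = f s}) :
    IsUSNoetherianRing (amalgamation f J) S' ↔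
      IsUSNoetherianRing A S ∧ IsUSNoetherianRing (imageAddIdeal f J) fS := by
  constructor
  · rintro ⟨u, huS', h⟩
    have hu : (u : A × B).1 ∈ S ∧ (u : A × B).2 = f (u : A × B).1 := by
      have := hS' ▸ (show u ∈ (S' : Set (amalgamation f J)) from huS')
      exact this
    constructor
    · exact ⟨amalgProj1 f J u, hu.1,
        uSN_of_surjective _ (amalgProj1_surjective f J) u h⟩
    · refine ⟨amalgProj2 f J u, ?_,
        uSN_of_surjective _ (amalgProj2_surjective f J) u h⟩
      rw [← SetLike.mem_coe, hfS]
      exact ⟨(u : A × B).1, hu.1, hu.2⟩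
  · rintro ⟨⟨s₁, hs₁, h₁⟩, ⟨v, hv, h₂⟩⟩
    obtain ⟨s₂, hs₂, hvs₂⟩ : ∃ s ∈ S, (v : B) = f s := by
      have := hfS ▸ (show v ∈ (fS : Set (imageAddIdeal f J)) from hv)
      exact this
    set π₁ := amalgProj1 f J
    set π₂ := amalgProj2 f J
    set s₁' : amalgamation f J := ⟨(s₁, f s₁), show f s₁ - f s₁ ∈ J by simp⟩ with hs₁'
    set s₂' : amalgamation f J := ⟨(s₂, f s₂), show f s₂ - f s₂ ∈ J by simp⟩ with hs₂'
    set u : amalgamation f J := s₂' * s₁' with hu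
    have huS' : u ∈ S' := by
      rw [← SetLike.mem_coe, hS']
      refine ⟨S.mul_mem hs₂ hs₁, ?_⟩
      show f s₂ * f s₁ = f (s₂ * s₁)
      rw [map_mul]
    refine ⟨u, huS', fun I => ?_⟩
    obtain ⟨K₁, hK₁fg, hK₁le, hK₁⟩ := h₁ (I.map π₁)
    obtain ⟨T₁, hT₁⟩ := hK₁fg
    obtain ⟨K₂, hK₂fg, hK₂le, hK₂⟩ := h₂ ((I ⊓ RingHom.ker π₁).map π₂)
    obtain ⟨T₂, hT₂⟩ := hK₂fg
    have hρ : ∀ t : (T₁ : Set A), ∃ r, r ∈ I ∧ π₁ r = (t : A) := by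
      intro t
      have ht : (t : A) ∈ I.map π₁ := hK₁le (hT₁ ▸ Ideal.subset_span t.2)
      exact (Ideal.mem_map_iff_of_surjective _ (amalgProj1_surjective f J)).mp ht
    choose ρ hρI hρπ using hρ
    have hσ : ∀ t : (T₂ : Set (imageAddIdeal f J)),
        ∃ r, r ∈ I ⊓ RingHom.ker π₁ ∧ π₂ r = (t : imageAddIdeal f J) := by
      intro t
      have ht : (t : imageAddIdeal f J) ∈ (I ⊓ RingHom.ker π₁).map π₂ :=
        hK₂le (hT₂ ▸ Ideal.subset_span t.2)
      exact (Ideal.mem_map_iff_of_surjective _ (amalgProj2_surjective f J)).mp ht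
    choose σ hσI hσπ using hσ
    set K : Ideal (amalgamation f J) := Ideal.span (Set.range ρ ∪ Set.range σ) with hK
    have hKfg : K.FG :=
      Submodule.fg_span ((Set.finite_range ρ).union (Set.finite_range σ))
    have hKI : K ≤ I := by
      rw [hK, Ideal.span_le]
      rintro r (⟨t, rfl⟩ | ⟨t, rfl⟩)
      · exact hρI t
      · exact (hσI t).1
    refine ⟨K, hKfg, hKI, fun x hx => ?_⟩
    -- step 1
    have hK₁map : K₁ ≤ K.map π₁ := by
      rw [← hT₁, Ideal.span_le]
      intro t ht
      have hm : ρ ⟨t, ht⟩ ∈ K := Ideal.subset_span (Or.inl ⟨⟨t, ht⟩, rfl⟩)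
      have h := Ideal.mem_map_of_mem π₁ hm
      rw [hρπ ⟨t, ht⟩] at h
      exact h
    have hy' : s₁ * π₁ x ∈ K₁ := hK₁ _ (Ideal.mem_map_of_mem _ hx)
    obtain ⟨y, hyK, hyπ⟩ :=
      (Ideal.mem_map_iff_of_surjective _ (amalgProj1_surjective f J)).mp (hK₁map hy')
    set z : amalgamation f J := s₁' * x - y with hz
    have hzI : z ∈ I := I.sub_mem (I.mul_mem_left _ hx) (hKI hyK)
    have hzker : π₁ z = 0 := by
      have : π₁ s₁' = s₁ := rfl
      rw [hz, RingHom.map_sub, RingHom.map_mul, this, hyπ, sub_self]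
    -- step 2
    have hK₂map : K₂ ≤ (K ⊓ RingHom.ker π₁).map π₂ := by
      rw [← hT₂, Ideal.span_le]
      intro t ht
      have h1 : σ ⟨t, ht⟩ ∈ K := Ideal.subset_span (Or.inr ⟨⟨t, ht⟩, rfl⟩)
      have h2 : σ ⟨t, ht⟩ ∈ RingHom.ker π₁ := (hσI ⟨t, ht⟩).2
      have h := Ideal.mem_map_of_mem π₂ (Ideal.mem_inf.mpr ⟨h1, h2⟩)
      rw [hσπ ⟨t, ht⟩] at h
      exact h
    have hz2 : v * π₂ z ∈ K₂ :=
      hK₂ _ (Ideal.mem_map_of_mem _ (Ideal.mem_inf.mpr ⟨hzI, hzker⟩))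
    obtain ⟨w, hwK, hwπ⟩ :=
      (Ideal.mem_map_iff_of_surjective _ (amalgProj2_surjective f J)).mp (hK₂map hz2)
    have hπ₂s₂ : π₂ s₂' = v := Subtype.ext (by exact hvs₂.symm)
    have hzw : s₂' * z = w := by
      apply amalg_ext f J
      · rw [RingHom.map_mul, hzker, mul_zero]
        exact ((Ideal.mem_inf.mp hwK).2).symm
      · rw [RingHom.map_mul, hπ₂s₂, hwπ]
    have key : u * x = s₂' * y + s₂' * z := by
      rw [hu, hz]; ring
    rw [key]
    exact K.add_mem (K.mul_mem_left _ hyK) (hzw ▸ (Ideal.mem_inf.mp hwK).1)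
end

section
/- Let R be a commutative ring, S a multiplicative subset of R, and E an R-module. Then the following are equivalent: (1) E is u-S-injective; (2) for every short exact sequence 0 → A →^f B →^g C → 0 of R-modules, the induced sequence 0 → Hom_R(C,E) →^{g*} Hom_R(B,E) →^{f*} Hom_R(A,E) → 0 is u-S-exact; (3) Ext_R^1(M, E) is u-S-torsion for every R-module M; (4) Ext_R^n(M, E) is u-S-torsion for every R-module M and every n ≥ 1. -/
open CategoryTheory

universe u v w

/-- An `R`-module `T` is uniformly `S`-torsion if there exists `s ∈ S` with `s • T = 0`. -/
def IsUSTorsion (R : Type*) [CommRing R] (S : Submonoid R)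
    (M : Type*) [AddCommGroup M] [Module R M] : Prop :=
  ∃ s ∈ S, ∀ x : M, s • x = 0

/-- An `R`-module `E` is uniformly `S`-injective if for every `u`-`S`-exact sequence
`0 → A → B → C → 0`, the induced sequence
`0 → Hom_R(C,E) → Hom_R(B,E) → Hom_R(A,E) → 0` is `u`-`S`-exact. -/
def IsUSInjective {R : Type u} [CommRing R] (S : Submonoid R)
    (E : Type v) [AddCommGroup E] [Module R E] : Prop :=
  ∀ (A B C : Type w) [AddCommGroup A] [AddCommGroup B] [AddCommGroup C]
    [Module R A] [Module R B] [Module R C]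
    (f : A →ₗ[R] B) (g : B →ₗ[R] C),
    IsUSExact S f g →
    IsUSExact S (LinearMap.lcomp R E g) (LinearMap.lcomp R E f)

/-! The pivot is the extension property: for each submodule `N ≤ B` there is one `u ∈ S` such
that `u • k` extends to `B` for every `k : N →ₗ[R] E`. It follows from (2) applied to
`0 → N → B → B ⧸ N → 0`, and from (3) because the obstruction to extending `k` is a class in
`Ext¹(B ⧸ N, E)`. Conversely it gives (1), by extending along `im f ≤ B` and `im g ≤ C` and
multiplying the constants, and it gives (4): computing `Ext^(n+1)(M, E)` from a projective
resolution `P`, a cocycle `P_(n+1) → E` kills `im d_(n+2) = ker d_(n+1)`, so it factors through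
`im d_(n+1) ≤ P_n`, where `u` times it extends to `P_n`, i.e. becomes a coboundary. -/

section

variable {R : Type u} [CommRing R] {S : Submonoid R}

lemma isUSTorsion_congr {M N : Type*} [AddCommGroup M] [Module R M] [AddCommGroup N]
    [Module R N] (e : M ≃ₗ[R] N) : IsUSTorsion R S M ↔ IsUSTorsion R S N := by
  refine ⟨fun ⟨s, hs, h⟩ => ⟨s, hs, fun y => ?_⟩, fun ⟨s, hs, h⟩ => ⟨s, hs, fun x => ?_⟩⟩
  · simpa using congrArg e (h (e.symm y))
  · simpa using congrArg e.symm (h (e x))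

lemma CategoryTheory.ShortComplex.isUSTorsion_homology_iff
    (T : ShortComplex (ModuleCat.{u} R)) :
    IsUSTorsion R S T.homology ↔
      ∃ s ∈ S, ∀ x : T.X₂, T.g x = 0 → s • x ∈ LinearMap.range T.f.hom := by
  rw [isUSTorsion_congr T.moduleCatHomologyIso.toLinearEquiv, IsUSTorsion]
  refine exists_congr fun s => and_congr_right fun _ => ?_
  refine ⟨fun h x hx => ?_, fun h z => ?_⟩
  · obtain ⟨y, hy⟩ := (Submodule.Quotient.mk_eq_zero _).mp (h (Submodule.Quotient.mk ⟨x, hx⟩))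
    exact ⟨y, congrArg Subtype.val hy⟩
  · obtain ⟨⟨x, hx⟩, rfl⟩ := Submodule.Quotient.mk_surjective _ z
    obtain ⟨y, hy⟩ := h x hx
    exact (Submodule.Quotient.mk_eq_zero _).mpr ⟨y, Subtype.ext hy⟩

lemma CategoryTheory.ProjectiveResolution.isUSTorsion_ext_succ_iff {M : ModuleCat.{u} R}
    (P : ProjectiveResolution M) (E : Type u) [AddCommGroup E] [Module R E] (m : ℕ) :
    IsUSTorsion R S (((Ext R (ModuleCat.{u} R) (m + 1)).obj (Opposite.op M)).obj
        (ModuleCat.of R E)) ↔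
      ∃ s ∈ S, ∀ h : P.complex.X (m + 1) →ₗ[R] E,
        h ∘ₗ (P.complex.d (m + 2) (m + 1)).hom = 0 →
          s • h ∈ LinearMap.range (LinearMap.lcomp R E (P.complex.d (m + 1) m).hom) := by
  set K := P.complex.linearYonedaObj R (ModuleCat.of R E)
  rw [isUSTorsion_congr (P.isoExt (m + 1) _ ≪≫
    K.homologyIsoSc' m (m + 1) (m + 2) (by simp) (by simp)).toLinearEquiv,
    ShortComplex.isUSTorsion_homology_iff]
  refine exists_congr fun s => and_congr_right fun _ => ?_
  refine ⟨fun h x hx => ?_, fun h x hx => ?_⟩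
  · obtain ⟨y, hy⟩ := h (ModuleCat.ofHom x) (by
      change P.complex.d (m + 2) (m + 1) ≫ ModuleCat.ofHom x = 0
      ext1; exact hx)
    exact ⟨y.hom, congrArg ModuleCat.Hom.hom hy⟩
  · obtain ⟨y, hy⟩ := h x.hom (congrArg ModuleCat.Hom.hom hx)
    refine ⟨ModuleCat.ofHom y, ?_⟩
    change P.complex.d (m + 1) m ≫ ModuleCat.ofHom y = s • x
    ext1; exact hy

namespace LinearMap

variable {A B E : Type*} [AddCommGroup A] [AddCommGroup B] [AddCommGroup E]
  [Module R A] [Module R B] [Module R E]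

lemma exists_comp_eq_of_surjective_of_ker_le {ρ : A →ₗ[R] B} (hρ : Function.Surjective ρ)
    {θ : A →ₗ[R] E} (h : ker ρ ≤ ker θ) : ∃ κ : B →ₗ[R] E, κ ∘ₗ ρ = θ :=
  ⟨(ker ρ).liftQ θ h ∘ₗ (ρ.quotKerEquivOfSurjective hρ).symm.toLinearMap, by
    ext x; simp [quotKerEquivOfSurjective_symm_apply]⟩

lemma smul_mem_range_lcomp_of_ker_le (f : A →ₗ[R] B) {u : R}
    (hu : ∀ k : range f →ₗ[R] E, u • k ∈ range (lcomp R E (range f).subtype))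
    {k : A →ₗ[R] E} (hk : ker f ≤ ker k) : u • k ∈ range (lcomp R E f) := by
  obtain ⟨k', rfl⟩ := exists_comp_eq_of_surjective_of_ker_le f.surjective_rangeRestrict
    (f.ker_rangeRestrict ▸ hk)
  obtain ⟨K, hK⟩ := hu k'
  refine ⟨K, ?_⟩
  rw [lcomp_apply'] at hK ⊢
  calc K ∘ₗ f = (K ∘ₗ (range f).subtype) ∘ₗ f.rangeRestrict := rfl
    _ = (u • k') ∘ₗ f.rangeRestrict := by rw [hK]

end LinearMap

namespace Submodule

variable {B E P₀ P₁ : Type*} [AddCommGroup B] [AddCommGroup E] [AddCommGroup P₀]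
  [AddCommGroup P₁] [Module R B] [Module R E] [Module R P₀] [Module R P₁]

lemma mem_range_lcomp_subtype_of_comp_eq (N : Submodule R B) {d : P₁ →ₗ[R] P₀}
    {φ : P₀ →ₗ[R] B} (hφ : Function.Surjective (N.mkQ ∘ₗ φ)) (hdφ : Function.Exact d (N.mkQ ∘ₗ φ))
    {ψ : P₁ →ₗ[R] N} (hψ : N.subtype ∘ₗ ψ = φ ∘ₗ d)
    {α : N →ₗ[R] E} {β : P₀ →ₗ[R] E} (hαβ : α ∘ₗ ψ = β ∘ₗ d) :
    α ∈ LinearMap.range (LinearMap.lcomp R E N.subtype) := by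
  -- `B` is the pushout of `N ← P₁ → P₀`, so `α` and `β` glue along `N × P₀ ↠ B`.
  have hsurj : Function.Surjective (N.subtype.coprod φ) := by
    intro b
    obtain ⟨p, hp⟩ := hφ (N.mkQ b)
    have hb : b - φ p ∈ N := by
      rw [← Submodule.Quotient.mk_eq_zero, Submodule.Quotient.mk_sub]
      exact sub_eq_zero.mpr hp.symm
    exact ⟨(⟨b - φ p, hb⟩, p), by simp⟩
  have hker : LinearMap.ker (N.subtype.coprod φ) ≤ LinearMap.ker (α.coprod β) := by
    rintro ⟨a, p⟩ hap
    have hap : (a : B) + φ p = 0 := hap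
    obtain ⟨q, rfl⟩ : p ∈ Set.range d := (hdφ p).mp <| by
      simp [eq_neg_of_add_eq_zero_right hap]
    have ha : a = -ψ q := Subtype.ext <| by
      simpa [eq_neg_of_add_eq_zero_left hap] using (congrArg (· q) hψ).symm
    have hq := congrArg (· q) hαβ
    simp only [LinearMap.comp_apply] at hq
    simp [ha, hq]
  obtain ⟨κ, hκ⟩ := LinearMap.exists_comp_eq_of_surjective_of_ker_le hsurj hker
  refine ⟨κ, ?_⟩
  rw [LinearMap.lcomp_apply', ← LinearMap.coprod_inl N.subtype φ, ← LinearMap.comp_assoc, hκ,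
    LinearMap.coprod_inl]

end Submodule

lemma exists_smul_mem_range_lcomp_subtype_of_isUSTorsion_ext_one {B E : Type u}
    [AddCommGroup B] [Module R B] [AddCommGroup E] [Module R E] (N : Submodule R B)
    (hN : IsUSTorsion R S (((Ext R (ModuleCat.{u} R) 1).obj
      (Opposite.op (ModuleCat.of R (B ⧸ N)))).obj (ModuleCat.of R E))) :
    ∃ u ∈ S, ∀ k : N →ₗ[R] E, u • k ∈ LinearMap.range (LinearMap.lcomp R E N.subtype) := by
  obtain ⟨P⟩ := HasProjectiveResolution.out (Z := ModuleCat.of R (B ⧸ N))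
  obtain ⟨u, hu, hcoboundary⟩ := (P.isUSTorsion_ext_succ_iff E 0).mp hN
  set d := (P.complex.d 1 0).hom
  set π : P.complex.X 0 →ₗ[R] B ⧸ N := (P.π.f 0).hom
  have hπ : Function.Surjective π := (ModuleCat.epi_iff_surjective _).mp inferInstance
  have hdπ : Function.Exact d π :=
    (ShortComplex.ShortExact.moduleCat_exact_iff_function_exact _).mp P.exact₀
  obtain ⟨φ, hφ⟩ := Module.projective_lifting_property N.mkQ π N.mkQ_surjective
  set ψ : P.complex.X 1 →ₗ[R] N := (φ ∘ₗ d).codRestrict N fun x => by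
    rw [← Submodule.Quotient.mk_eq_zero, LinearMap.comp_apply, ← N.mkQ_apply,
      ← LinearMap.comp_apply, hφ]
    exact hdπ.apply_apply_eq_zero x
  have hψd : ψ ∘ₗ (P.complex.d 2 1).hom = 0 := by
    ext x
    simp [ψ, d, ← LinearMap.comp_apply, ← ModuleCat.hom_comp]
  refine ⟨u, hu, fun k => ?_⟩
  obtain ⟨e, he⟩ := hcoboundary (k ∘ₗ ψ) (by rw [LinearMap.comp_assoc, hψd, LinearMap.comp_zero])
  exact N.mem_range_lcomp_subtype_of_comp_eq (d := d) (φ := φ) (hφ ▸ hπ) (hφ ▸ hdπ)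
    (ψ := ψ) rfl (by rw [LinearMap.smul_comp, ← he]; rfl)

lemma IsUSExact.of_exact {A B C : Type*} [AddCommGroup A] [AddCommGroup B] [AddCommGroup C]
    [Module R A] [Module R B] [Module R C] {f : A →ₗ[R] B} {g : B →ₗ[R] C}
    (hf : Function.Injective f) (hfg : Function.Exact f g) (hg : Function.Surjective g) :
    IsUSExact S f g := by
  refine ⟨1, S.one_mem, fun x hx => ?_, fun x hx => ?_, fun x hx => ?_, fun c => ?_⟩ <;>
    rw [one_smul]
  · exact hf (by rwa [map_zero])
  · exact (hfg x).mp hx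
  · obtain ⟨a, rfl⟩ := hx
    exact hfg.apply_apply_eq_zero a
  · exact hg c

def HasUSExtensionProperty (S : Submonoid R) (E : Type v) [AddCommGroup E] [Module R E] :
    Prop :=
  ∀ (B : Type v) [AddCommGroup B] [Module R B] (N : Submodule R B),
    ∃ u ∈ S, ∀ k : N →ₗ[R] E, u • k ∈ LinearMap.range (LinearMap.lcomp R E N.subtype)

namespace HasUSExtensionProperty

section

variable {E : Type v} [AddCommGroup E] [Module R E]

lemma of_isUSExact_lcomp
    (hE : ∀ (A B C : Type v) [AddCommGroup A] [AddCommGroup B] [AddCommGroup C]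
      [Module R A] [Module R B] [Module R C] (f : A →ₗ[R] B) (g : B →ₗ[R] C),
      Function.Injective f → Function.Exact f g → Function.Surjective g →
        IsUSExact S (LinearMap.lcomp R E g) (LinearMap.lcomp R E f)) :
    HasUSExtensionProperty S E := fun B _ _ N => by
  obtain ⟨u, hu, -, -, -, hext⟩ := hE N B (B ⧸ N) N.subtype N.mkQ N.injective_subtype
    (LinearMap.exact_subtype_mkQ N) N.mkQ_surjective
  exact ⟨u, hu, hext⟩

lemma isUSExact_lcomp (hE : HasUSExtensionProperty S E) {A B C : Type v} [AddCommGroup A]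
    [AddCommGroup B] [AddCommGroup C] [Module R A] [Module R B] [Module R C]
    {f : A →ₗ[R] B} {g : B →ₗ[R] C} (hfg : IsUSExact S f g) :
    IsUSExact S (LinearMap.lcomp R E g) (LinearMap.lcomp R E f) := by
  obtain ⟨s, hs, hker_f, hker_g, hrange_f, hrange_g⟩ := hfg
  obtain ⟨u₁, hu₁, hext_g⟩ := hE C (LinearMap.range g)
  obtain ⟨u₂, hu₂, hext_f⟩ := hE B (LinearMap.range f)
  refine ⟨u₁ * u₂ * s, mul_mem (mul_mem hu₁ hu₂) hs, fun h hh => ?_, fun h hh => ?_,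
    ?_, fun k => ?_⟩
  · have hsh : s • h = 0 := by
      ext c
      obtain ⟨b, hb⟩ := hrange_g c
      rw [LinearMap.smul_apply, ← map_smul, ← hb, ← LinearMap.comp_apply]
      exact congrArg (· b) hh
    rw [mul_smul, hsh, smul_zero]
  · have : u₁ • s • h ∈ LinearMap.range (LinearMap.lcomp R E g) :=
      g.smul_mem_range_lcomp_of_ker_le hext_g fun b hb => by
        obtain ⟨a, ha⟩ := hker_g b hb
        rw [LinearMap.mem_ker, LinearMap.smul_apply, ← map_smul, ← ha]
        exact congrArg (· a) hh
    rw [mul_comm u₁, mul_smul, mul_smul]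
    exact Submodule.smul_mem _ _ this
  · rintro _ ⟨H, rfl⟩
    rw [LinearMap.mem_ker]
    ext a
    have hgf := hrange_f (f a) ⟨a, rfl⟩
    rw [LinearMap.mem_ker, map_smul] at hgf
    simp only [map_smul, LinearMap.lcomp_apply, LinearMap.smul_apply, LinearMap.zero_apply]
    rw [mul_smul, ← map_smul, hgf, map_zero, smul_zero]
  · have : u₂ • s • k ∈ LinearMap.range (LinearMap.lcomp R E f) :=
      f.smul_mem_range_lcomp_of_ker_le hext_f fun a ha => by
        simp [← map_smul, hker_f a ha]
    rw [mul_smul, mul_smul]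
    exact Submodule.smul_mem _ _ this

end

variable {E : Type u} [AddCommGroup E] [Module R E]

lemma isUSTorsion_ext (hE : HasUSExtensionProperty S E) (M : ModuleCat.{u} R) {n : ℕ}
    (hn : 1 ≤ n) :
    IsUSTorsion R S (((Ext R (ModuleCat.{u} R) n).obj (Opposite.op M)).obj
      (ModuleCat.of R E)) := by
  obtain ⟨m, rfl⟩ := Nat.exists_eq_add_of_le' hn
  obtain ⟨P⟩ := HasProjectiveResolution.out (Z := M)
  set d := (P.complex.d (m + 1) m).hom
  obtain ⟨u, hu, hext⟩ := hE _ (LinearMap.range d)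
  refine (P.isUSTorsion_ext_succ_iff E m).mpr
    ⟨u, hu, fun h hcocycle => d.smul_mem_range_lcomp_of_ker_le hext ?_⟩
  rw [← (P.exact_succ m).moduleCat_range_eq_ker]
  rintro _ ⟨x, rfl⟩
  exact congrArg (· x) hcocycle

lemma of_isUSTorsion_ext_one (hE : ∀ (M : Type u) [AddCommGroup M] [Module R M],
      IsUSTorsion R S (((Ext R (ModuleCat.{u} R) 1).obj (Opposite.op (ModuleCat.of R M))).obj
        (ModuleCat.of R E))) :
    HasUSExtensionProperty S E := fun B _ _ N =>
  exists_smul_mem_range_lcomp_subtype_of_isUSTorsion_ext_one N (hE (B ⧸ N))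

end HasUSExtensionProperty

lemma isUSInjective_iff_hasUSExtensionProperty {E : Type v} [AddCommGroup E] [Module R E] :
    IsUSInjective.{u, v, v} S E ↔ HasUSExtensionProperty S E :=
  ⟨fun hE => .of_isUSExact_lcomp fun A B C _ _ _ _ _ _ f g hf hfg hg =>
      hE A B C f g (.of_exact hf hfg hg),
    fun hE _ _ _ _ _ _ _ _ _ _ _ hfg => hE.isUSExact_lcomp hfg⟩

end

/-- Characterizations of `u`-`S`-injective modules: `E` is `u`-`S`-injective iff the
contravariant Hom functor sends every short exact sequence to a `u`-`S`-exact sequence, iff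
`Ext_R^1(M, E)` is `u`-`S`-torsion for every `M`, iff `Ext_R^n(M, E)` is `u`-`S`-torsion
for every `M` and every `n ≥ 1`. -/
theorem isUSInjective_iff_ext_isUSTorsion
    (R : Type u) [CommRing R] (S : Submonoid R)
    (E : Type u) [AddCommGroup E] [Module R E] :
    (IsUSInjective.{u, u, u} S E ↔
      ∀ (A B C : Type u) [AddCommGroup A] [AddCommGroup B] [AddCommGroup C]
        [Module R A] [Module R B] [Module R C]
        (f : A →ₗ[R] B) (g : B →ₗ[R] C),
        Function.Injective f → Function.Exact f g → Function.Surjective g →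
          IsUSExact S (LinearMap.lcomp R E g) (LinearMap.lcomp R E f)) ∧
    (IsUSInjective.{u, u, u} S E ↔
      ∀ (M : Type u) [AddCommGroup M] [Module R M],
        IsUSTorsion R S
          (((Ext R (ModuleCat.{u} R) 1).obj (Opposite.op (ModuleCat.of R M))).obj
            (ModuleCat.of R E))) ∧
    (IsUSInjective.{u, u, u} S E ↔
      ∀ (M : Type u) [AddCommGroup M] [Module R M], ∀ n : ℕ, 1 ≤ n →
        IsUSTorsion R S
          (((Ext R (ModuleCat.{u} R) n).obj (Opposite.op (ModuleCat.of R M))).obj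
            (ModuleCat.of R E))) := by
  rw [isUSInjective_iff_hasUSExtensionProperty]
  refine ⟨⟨fun hE A B C _ _ _ _ _ _ f g hf hfg hg => hE.isUSExact_lcomp (.of_exact hf hfg hg),
      .of_isUSExact_lcomp⟩,
    ⟨fun hE M _ _ => hE.isUSTorsion_ext _ le_rfl, .of_isUSTorsion_ext_one⟩,
    ⟨fun hE M _ _ _ hn => hE.isUSTorsion_ext _ hn,
      fun hE => .of_isUSTorsion_ext_one fun M _ _ => hE M 1 le_rfl⟩⟩
end
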